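/- For any graphs G and H, min{n(G), n(H)} ≤ γ_r(G □ H) ≤ min{n(G)·γ_r(H), n(H)·γ_r(G)}, where □ denotes the Cartesian product. -/

import Mathlib

open Finset

variable {V : Type*}

/-- `S` is a dominating set of `G`. -/
def Dominating (G : SimpleGraph V) (S : Set V) : Prop :=
  ∀ v, v ∉ S → ∃ u ∈ S, G.Adj u v

/-- `S` is a secure dominating set of `G`. -/
def SecureDominating (G : SimpleGraph V) (S : Set V) : Prop :=
  Dominating G S ∧ ∀ v, v ∉ S → ∃ u ∈ S, G.Adj u v ∧ Dominating G ((S \ {u}) ∪ {v})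

/-- The domination number `γ(G)`. -/
noncomputable def domNum (G : SimpleGraph V) : ℕ :=
  sInf {n | ∃ S : Set V, Dominating G S ∧ S.ncard = n}

/-- The secure domination number `γ_s(G)`. -/
noncomputable def secDomNum (G : SimpleGraph V) : ℕ :=
  sInf {n | ∃ S : Set V, SecureDominating G S ∧ S.ncard = n}

/-- `v` is undefended with respect to the guard function `f`. -/
def Undefended (G : SimpleGraph V) (f : V → ℕ) (v : V) : Prop :=
  f v = 0 ∧ ∀ u, G.Adj u v → f u = 0

/-- `f` is a weak Roman dominating function on `G`. -/
def IsWRDF [DecidableEq V] (G : SimpleGraph V) (f : V → ℕ) : Prop :=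
  (∀ v, f v ≤ 2) ∧ ∀ v, f v = 0 → ∃ u, G.Adj u v ∧ 1 ≤ f u ∧
    ∀ w, ¬ Undefended G (Function.update (Function.update f u (f u - 1)) v 1) w

/-- The weak Roman domination number `γ_r(G)`. -/
noncomputable def weakRomanNum [Fintype V] [DecidableEq V] (G : SimpleGraph V) : ℕ :=
  sInf {n | ∃ f : V → ℕ, IsWRDF G f ∧ ∑ v, f v = n}

/-! The support of a weak Roman dominating function is a dominating set, so `γ ≤ γ_r`. A dominating
set of `G □ H` meets every row `{a} × H` or every column `G × {b}`: a vertex whose row and column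
both miss it has no dominator. Hence it has at least `min (n G) (n H)` elements.

Conversely, a weak Roman dominating function `f` of `H` gives `(a, b) ↦ f b` on `G □ H`. The move
defending `(a, b)` happens inside the copy `{a} × H`, which then looks like `H` after the move in
`H`, while every other copy still carries `f` itself; so nothing becomes undefended. The symmetry
`G □ H ≃g H □ G` gives the other product. -/

open SimpleGraph Function

section General

variable {V W : Type*}

lemma IsWRDF.not_undefended [DecidableEq V] {G : SimpleGraph V} {f : V → ℕ} (hf : IsWRDF G f)
    (v : V) : ¬ Undefended G f v := by
  rintro ⟨hv, hnbr⟩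
  obtain ⟨u, hu, hfu, -⟩ := hf.2 v hv
  exact absurd (hnbr u hu) (by omega)

lemma IsWRDF.dominating_support [DecidableEq V] {G : SimpleGraph V} {f : V → ℕ}
    (hf : IsWRDF G f) : Dominating G (Function.support f) := by
  intro v hv
  obtain ⟨u, hu, hfu, -⟩ := hf.2 v (Function.notMem_support.1 hv)
  exact ⟨u, by rw [Function.mem_support]; omega, hu⟩

lemma isWRDF_one [DecidableEq V] (G : SimpleGraph V) : IsWRDF G (fun _ => 1) :=
  ⟨fun _ => one_le_two, fun _ h => absurd h one_ne_zero⟩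

lemma exists_isWRDF_sum_eq_weakRomanNum [Fintype V] [DecidableEq V] (G : SimpleGraph V) :
    ∃ f : V → ℕ, IsWRDF G f ∧ ∑ v, f v = weakRomanNum G :=
  Nat.sInf_mem (s := {n | ∃ f : V → ℕ, IsWRDF G f ∧ ∑ v, f v = n})
    ⟨_, _, isWRDF_one G, rfl⟩

lemma weakRomanNum_le_sum [Fintype V] [DecidableEq V] {G : SimpleGraph V} {f : V → ℕ}
    (hf : IsWRDF G f) : weakRomanNum G ≤ ∑ v, f v :=
  Nat.sInf_le ⟨f, hf, rfl⟩

lemma exists_dominating_ncard_eq_domNum [Finite V] (G : SimpleGraph V) :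
    ∃ S : Set V, Dominating G S ∧ S.ncard = domNum G :=
  Nat.sInf_mem (s := {n | ∃ S : Set V, Dominating G S ∧ S.ncard = n})
    ⟨_, Set.univ, fun _ hv => absurd trivial hv, rfl⟩

lemma domNum_le_ncard {G : SimpleGraph V} {S : Set V} (hS : Dominating G S) :
    domNum G ≤ S.ncard :=
  Nat.sInf_le ⟨S, hS, rfl⟩

lemma ncard_support_le_sum [Fintype V] (f : V → ℕ) : (Function.support f).ncard ≤ ∑ v, f v := by
  classical
  calc (Function.support f).ncard = (Finset.univ.filter fun v => f v ≠ 0).card := by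
        rw [Set.ncard_eq_toFinset_card']; congr 1; ext; simp
    _ = ∑ v, if f v ≠ 0 then 1 else 0 := Finset.card_filter _ _
    _ ≤ ∑ v, f v := Finset.sum_le_sum fun v _ => by split_ifs <;> omega

lemma domNum_le_weakRomanNum [Fintype V] [DecidableEq V] (G : SimpleGraph V) :
    domNum G ≤ weakRomanNum G := by
  obtain ⟨f, hf, hsum⟩ := exists_isWRDF_sum_eq_weakRomanNum G
  calc domNum G ≤ (Function.support f).ncard := domNum_le_ncard hf.dominating_support
    _ ≤ ∑ v, f v := ncard_support_le_sum f
    _ = weakRomanNum G := hsum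

lemma Undefended.of_comp_iso {G : SimpleGraph V} {G' : SimpleGraph W} (e : G ≃g G')
    {g : W → ℕ} {w : V} (h : Undefended G (g ∘ e) w) : Undefended G' g (e w) := by
  refine ⟨h.1, fun u hu => ?_⟩
  simpa using h.2 (e.symm u) (by rwa [← e.map_adj_iff, e.apply_symm_apply])

lemma IsWRDF.comp_iso [DecidableEq V] [DecidableEq W] {G : SimpleGraph V} {G' : SimpleGraph W}
    (e : G ≃g G') {f : W → ℕ} (hf : IsWRDF G' f) : IsWRDF G (f ∘ e) := by
  refine ⟨fun v => hf.1 (e v), fun v hv => ?_⟩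
  obtain ⟨u, hu, hfu, hmove⟩ := hf.2 (e v) hv
  refine ⟨e.symm u, by rwa [← e.map_adj_iff, e.apply_symm_apply], by simpa using hfu,
    fun w hw => hmove (e w) (Undefended.of_comp_iso e ?_)⟩
  convert hw using 1
  funext x
  simp only [comp_apply, update_apply, e.apply_eq_iff_eq, e.eq_symm_apply, e.apply_symm_apply]

lemma weakRomanNum_le_of_iso [Fintype V] [Fintype W] [DecidableEq V] [DecidableEq W]
    {G : SimpleGraph V} {G' : SimpleGraph W} (e : G ≃g G') : weakRomanNum G ≤ weakRomanNum G' := by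
  obtain ⟨f, hf, hsum⟩ := exists_isWRDF_sum_eq_weakRomanNum G'
  calc weakRomanNum G ≤ ∑ v, f (e v) := weakRomanNum_le_sum (hf.comp_iso e)
    _ = weakRomanNum G' := by rw [← hsum]; exact e.toEquiv.sum_comp f

end General

section BoxProd

variable {α β : Type*} {G : SimpleGraph α} {H : SimpleGraph β}

lemma Dominating.boxProd_rows_or_columns {S : Set (α × β)} (hS : Dominating (G □ H) S) :
    (∀ a, ∃ b, (a, b) ∈ S) ∨ ∀ b, ∃ a, (a, b) ∈ S := by
  by_contra! ⟨⟨a, ha⟩, b, hb⟩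
  obtain ⟨⟨a', b'⟩, hS', hadj⟩ := hS (a, b) (ha b)
  rcases boxProd_adj.1 hadj with ⟨-, rfl⟩ | ⟨-, rfl⟩
  · exact hb a' hS'
  · exact ha b' hS'

lemma nat_card_le_ncard_of_injective {γ : Type*} [Finite α] {S : Set γ} (hS : S.Finite)
    (g : α → γ) (hg : Injective g) (h : ∀ a, g a ∈ S) : Nat.card α ≤ S.ncard := by
  rw [← Set.ncard_univ]
  exact Set.ncard_le_ncard_of_injOn g (fun a _ => h a) hg.injOn hS

lemma Dominating.min_card_le_ncard_boxProd [Fintype α] [Fintype β] {S : Set (α × β)}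
    (hS : Dominating (G □ H) S) : min (Fintype.card α) (Fintype.card β) ≤ S.ncard := by
  rcases hS.boxProd_rows_or_columns with hrows | hcols
  · choose b hb using hrows
    have := nat_card_le_ncard_of_injective S.toFinite (fun a => (a, b a))
      (fun _ _ h => congrArg Prod.fst h) hb
    exact (min_le_left _ _).trans (by simpa using this)
  · choose a ha using hcols
    have := nat_card_le_ncard_of_injective S.toFinite (fun b => (a b, b))
      (fun _ _ h => congrArg Prod.snd h) ha
    exact (min_le_right _ _).trans (by simpa using this)

lemma min_card_le_domNum_boxProd [Fintype α] [Fintype β] (G : SimpleGraph α)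
    (H : SimpleGraph β) : min (Fintype.card α) (Fintype.card β) ≤ domNum (G □ H) := by
  obtain ⟨S, hS, hcard⟩ := exists_dominating_ncard_eq_domNum (G □ H)
  exact hcard ▸ hS.min_card_le_ncard_boxProd

lemma Undefended.boxProd_snd {F : α × β → ℕ} {x : α} {y : β} (h : Undefended (G □ H) F (x, y)) :
    Undefended H (fun z => F (x, z)) y :=
  ⟨h.1, fun u hu => h.2 (x, u) (boxProd_adj_right.2 hu)⟩

lemma row_update_update_comp_snd [DecidableEq α] [DecidableEq β] (f : β → ℕ) (a x : α)
    (u b : β) (c d : ℕ) :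
    (fun z => update (update (fun p : α × β => f p.2) (a, u) c) (a, b) d (x, z)) =
      if x = a then update (update f u c) b d else f := by
  funext z
  split_ifs with hx
  · subst hx; simp [update_apply]
  · simp [hx]

lemma IsWRDF.comp_snd [DecidableEq α] [DecidableEq β] {f : β → ℕ} (hf : IsWRDF H f) :
    IsWRDF (G □ H) (fun p => f p.2) := by
  refine ⟨fun p => hf.1 p.2, ?_⟩
  rintro ⟨a, b⟩ hb
  obtain ⟨u, hub, hu, hmove⟩ := hf.2 b hb
  refine ⟨(a, u), boxProd_adj_right.2 hub, hu, ?_⟩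
  rintro ⟨x, y⟩ hxy
  have hrow := hxy.boxProd_snd
  rw [row_update_update_comp_snd] at hrow
  split_ifs at hrow
  · exact hmove y hrow
  · exact hf.not_undefended y hrow

lemma weakRomanNum_boxProd_le [Fintype α] [Fintype β] [DecidableEq α] [DecidableEq β]
    (G : SimpleGraph α) (H : SimpleGraph β) :
    weakRomanNum (G □ H) ≤ Fintype.card α * weakRomanNum H := by
  obtain ⟨f, hf, hsum⟩ := exists_isWRDF_sum_eq_weakRomanNum H
  calc weakRomanNum (G □ H) ≤ ∑ p : α × β, f p.2 := weakRomanNum_le_sum hf.comp_snd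
    _ = Fintype.card α * weakRomanNum H := by simp [Fintype.sum_prod_type, hsum]

end BoxProd

theorem stmt17 {α β : Type*} [Fintype α] [Fintype β] [DecidableEq α] [DecidableEq β]
    (G : SimpleGraph α) (H : SimpleGraph β) :
    min (Fintype.card α) (Fintype.card β) ≤ weakRomanNum (G.boxProd H) ∧
      weakRomanNum (G.boxProd H) ≤
        min (Fintype.card α * weakRomanNum H) (Fintype.card β * weakRomanNum G) :=
  ⟨(min_card_le_domNum_boxProd G H).trans (domNum_le_weakRomanNum _),
    le_min (weakRomanNum_boxProd_le G H)
      ((weakRomanNum_le_of_iso (boxProdComm G H)).trans (weakRomanNum_boxProd_le H G))⟩
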